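/- Let H be a connected bipartite graph with maximum degree at most three and at least 7 vertices. Then there exist t ∈ ℕ and a partition V(H) = B₁ ∪ ⋯ ∪ B_t such that: (1) for each i, the subgraph of H induced by B_i is either a path or a cycle of length at least six; and (2) for every i ∈ {2,…,t}, each vertex of B_i has at most one neighbour in B₁ ∪ ⋯ ∪ B_{i−1}. -/

import Mathlib

/-!
Blocks are peeled off from the end, so it suffices to find, in every nonempty finite vertex set
`S`, an induced path or an induced cycle of length at least six each of whose vertices has at most
one neighbour in the rest of `S`. Connectivity and the seven vertices serve only to exclude a
`K₃,₃`, a condition that, unlike connectivity, survives the passage to arbitrary `S`.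

Take a longest induced path `f 0, …, f (M - 1)` in `S`. If both ends have at most two neighbours
in `S`, the path itself will do. Otherwise `f 0` has two neighbours `p, q` off the path; by
maximality each has a chord back to the path, and by bipartiteness the first chord from `p` lands
at an even index. Landing at index at least four closes an induced cycle of length at least six,
which will do. Otherwise `p` and `q` are both adjacent to `f 2`, so the path has three vertices,
and maximality leaves two possibilities: either `f 1` has a third neighbour, which is then adjacent
to `p` and `q` and completes a `K₃,₃`, or `f 1, f 0, p` is an induced path that will do.
-/

open Finset

lemma Fin.val_sub_eq_one_iff {M : ℕ} (hM : 2 ≤ M) (a b : Fin M) :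
    (a - b).val = 1 ↔ b.val + 1 = a.val ∨ a.val = 0 ∧ b.val + 1 = M := by
  rcases le_or_gt b a with h | h
  · rw [Fin.coe_sub_iff_le.2 h]; omega
  · rw [Fin.coe_sub_iff_lt.2 h]; omega

namespace SimpleGraph

variable {ι : Type*} {H : SimpleGraph ι} {S : Finset ι} {M : ℕ} {f : ℕ → ι}

lemma Coloring.eq_of_adj_of_adj (c : H.Coloring (Fin 2)) {a b d : ι} (hab : H.Adj a b)
    (hbd : H.Adj b d) : c a = c d := by
  have h₁ := c.valid hab
  have h₂ := c.valid hbd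
  omega

lemma Coloring.not_adj_of_adj_of_adj (c : H.Coloring (Fin 2)) {a b d : ι} (hab : H.Adj a b)
    (hbd : H.Adj b d) : ¬H.Adj a d :=
  fun had => c.valid had (c.eq_of_adj_of_adj hab hbd)

-- Paths and cycles are given by their vertex sequences `f 0, …, f (M - 1)`, so that all index
-- arithmetic happens in `ℕ`; the values of `f` from `M` on play no role.
structure IsInducedPath (H : SimpleGraph ι) (S : Finset ι) (M : ℕ) (f : ℕ → ι) : Prop where
  mem : ∀ i < M, f i ∈ S
  injOn : ∀ i < M, ∀ j < M, f i = f j → i = j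
  adj_iff : ∀ i < M, ∀ j < M, H.Adj (f i) (f j) ↔ i + 1 = j ∨ j + 1 = i

structure IsInducedCycle (H : SimpleGraph ι) (S : Finset ι) (M : ℕ) (f : ℕ → ι) : Prop where
  mem : ∀ i < M, f i ∈ S
  injOn : ∀ i < M, ∀ j < M, f i = f j → i = j
  adj_iff : ∀ i < M, ∀ j < M,
    H.Adj (f i) (f j) ↔ i + 1 = j ∨ j + 1 = i ∨ i = 0 ∧ j + 1 = M ∨ j = 0 ∧ i + 1 = M

lemma isInducedPath_one {v : ι} (hv : v ∈ S) : H.IsInducedPath S 1 (fun _ => v) where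
  mem _ _ := hv
  injOn _ _ _ _ _ := by omega
  adj_iff _ _ _ _ := by simp only [H.irrefl, false_iff]; omega

lemma isInducedPath_three {a b d : ι} (ha : a ∈ S) (hb : b ∈ S) (hd : d ∈ S)
    (hab : H.Adj a b) (hbd : H.Adj b d) (had : ¬H.Adj a d) (hne : a ≠ d) :
    H.IsInducedPath S 3 (fun i => if i = 0 then a else if i = 1 then b else d) where
  mem i hi := by interval_cases i <;> simpa
  injOn i hi j hj h := by
    interval_cases i <;> interval_cases j <;> simp_all [hab.ne, hbd.ne, hab.ne.symm, hbd.ne.symm]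
  adj_iff i hi j hj := by
    have hda : ¬H.Adj d a := fun h => had h.symm
    interval_cases i <;> interval_cases j <;> simp [hab, hbd, hab.symm, hbd.symm, had, hda]

namespace IsInducedPath

lemma adj_succ (hf : H.IsInducedPath S M f) {i : ℕ} (hi : i + 1 < M) : H.Adj (f i) (f (i + 1)) :=
  (hf.adj_iff i (by omega) (i + 1) hi).2 (Or.inl rfl)

lemma card_le [DecidableEq ι] (hf : H.IsInducedPath S M f) : M ≤ #S := by
  calc M = #((range M).image f) := by
        rw [card_image_of_injOn fun i hi j hj => hf.injOn i (mem_range.1 hi) j (mem_range.1 hj),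
          card_range]
    _ ≤ #S := card_le_card fun x hx => by
        obtain ⟨i, hi, rfl⟩ := mem_image.1 hx
        exact hf.mem i (mem_range.1 hi)

lemma reverse (hf : H.IsInducedPath S M f) : H.IsInducedPath S M (fun i => f (M - 1 - i)) where
  mem i hi := hf.mem _ (by omega)
  injOn i hi j hj h := by have := hf.injOn _ (by omega) _ (by omega) h; omega
  adj_iff i hi j hj := by rw [hf.adj_iff _ (by omega) _ (by omega)]; omega

lemma cons (hf : H.IsInducedPath S M f) {y : ι} (hy : y ∈ S) (hyf : ∀ i < M, f i ≠ y)
    (hadj : ∀ i < M, H.Adj y (f i) ↔ i = 0) :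
    H.IsInducedPath S (M + 1) (fun i => if i = 0 then y else f (i - 1)) where
  mem i hi := by
    split_ifs
    · exact hy
    · exact hf.mem _ (by omega)
  injOn i hi j hj h := by
    split_ifs at h with hi0 hj0 hj0
    · omega
    · exact absurd h.symm (hyf _ (by omega))
    · exact absurd h (hyf _ (by omega))
    · have := hf.injOn _ (by omega) _ (by omega) h; omega
  adj_iff i hi j hj := by
    split_ifs with hi0 hj0 hj0
    · simp only [H.irrefl, false_iff]; omega
    · rw [hadj _ (by omega)]; omega
    · rw [H.adj_comm, hadj _ (by omega)]; omega
    · rw [hf.adj_iff _ (by omega) _ (by omega)]; omega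

lemma exists_adj_of_maximal (hf : H.IsInducedPath S M f)
    (hmax : ∀ g, ¬H.IsInducedPath S (M + 1) g) {y : ι} (hy : y ∈ S) (hyf : ∀ i < M, f i ≠ y)
    (hy0 : H.Adj y (f 0)) : ∃ i, 0 < i ∧ i < M ∧ H.Adj y (f i) := by
  by_contra! h
  refine hmax _ (hf.cons hy hyf fun i hi => ⟨fun hyi => ?_, ?_⟩)
  · by_contra hi0
    exact h i (by omega) hi hyi
  · rintro rfl; exact hy0

lemma ne_of_adj_zero (hf : H.IsInducedPath S M f) {y : ι} (hy0 : H.Adj y (f 0)) (hy1 : y ≠ f 1) :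
    ∀ i < M, f i ≠ y := by
  rintro i hi rfl
  obtain rfl : i = 1 := by have := (hf.adj_iff i hi 0 (by omega)).1 hy0; omega
  exact hy1 rfl

lemma color_eq_iff_even (c : H.Coloring (Fin 2)) (hf : H.IsInducedPath S M f) {i : ℕ}
    (hi : i < M) : c (f i) = c (f 0) ↔ Even i := by
  induction i with
  | zero => simp
  | succ i ih =>
    have hne := c.valid (hf.adj_succ hi)
    rw [Nat.even_add_one, ← ih (by omega)]
    omega

lemma isInducedCycle_of_chord (hf : H.IsInducedPath S M f) {y : ι} {k : ℕ} (hy : y ∈ S)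
    (hyf : ∀ i < M, f i ≠ y) (hy0 : H.Adj y (f 0)) (hyk : H.Adj y (f k)) (hkM : k < M)
    (hmin : ∀ i, 0 < i → i < k → ¬H.Adj y (f i)) :
    H.IsInducedCycle S (k + 2) (fun i => if i ≤ k then f i else y) where
  mem i hi := by
    split_ifs
    · exact hf.mem _ (by omega)
    · exact hy
  injOn i hi j hj h := by
    split_ifs at h with hik hjk hjk
    · exact hf.injOn _ (by omega) _ (by omega) h
    · exact absurd h (hyf _ (by omega))
    · exact absurd h.symm (hyf _ (by omega))
    · omega
  adj_iff i hi j hj := by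
    have hchord : ∀ i ≤ k, H.Adj y (f i) ↔ i = 0 ∨ i = k := fun i hik =>
      ⟨fun h => by by_contra! hne; exact hmin i (by omega) (by omega) h,
        by rintro (rfl | rfl) <;> assumption⟩
    split_ifs with hik hjk hjk
    · rw [hf.adj_iff _ (by omega) _ (by omega)]; omega
    · rw [H.adj_comm, hchord i hik]; omega
    · rw [hchord j hjk]; omega
    · simp only [H.irrefl, false_iff]; omega

end IsInducedPath

lemma exists_longest_isInducedPath (hS : S.Nonempty) :
    ∃ M f, 0 < M ∧ H.IsInducedPath S M f ∧ ∀ g, ¬H.IsInducedPath S (M + 1) g := by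
  classical
  obtain ⟨v, hv⟩ := hS
  have hP : ∃ f, H.IsInducedPath S 1 f := ⟨_, isInducedPath_one hv⟩
  have hcard : 1 ≤ #S := card_pos.2 ⟨v, hv⟩
  obtain ⟨f, hf⟩ := Nat.findGreatest_spec (P := fun m => ∃ f, H.IsInducedPath S m f) hcard hP
  exact ⟨_, f, Nat.le_findGreatest hcard hP, hf, fun g hg =>
    Nat.findGreatest_is_greatest (Nat.lt_succ_self _) hg.card_le ⟨g, hg⟩⟩

lemma adj_of_forall_not_isInducedPath_four (c : H.Coloring (Fin 2))
    (hmax : ∀ g, ¬H.IsInducedPath S 4 g) {a b d x : ι} (ha : a ∈ S) (hb : b ∈ S) (hd : d ∈ S)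
    (hx : x ∈ S) (hab : H.Adj a b) (hbd : H.Adj b d) (had : a ≠ d) (hxa : H.Adj x a)
    (hxb : x ≠ b) (hxd : x ≠ d) : H.Adj x d := by
  have hg := isInducedPath_three ha hb hd hab hbd (c.not_adj_of_adj_of_adj hab hbd) had
  obtain ⟨i, hi0, hi3, hxi⟩ := hg.exists_adj_of_maximal hmax hx
    (fun i hi => by interval_cases i <;> simp [hxa.ne.symm, hxb.symm, hxd.symm]) (by simpa)
  interval_cases i
  · exact absurd hxi (c.not_adj_of_adj_of_adj hxa hab)
  · simpa using hxi

lemma card_filter_adj_le [DecidableRel H.Adj] [H.LocallyFinite] {k : ℕ}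
    (hΔ : ∀ v, H.degree v ≤ k) (S : Finset ι) (v : ι) : #(S.filter (H.Adj v)) ≤ k :=
  (card_le_card fun w hw => (mem_neighborFinset H v w).2 (mem_filter.1 hw).2).trans (hΔ v)

def IsPathOrLongCycle (H : SimpleGraph ι) (B : Finset ι) : Prop :=
  (∃ m, Nonempty (H.induce (B : Set ι) ≃g pathGraph m)) ∨
    ∃ m, 6 ≤ m ∧ Nonempty (H.induce (B : Set ι) ≃g cycleGraph m)

def K33Free (H : SimpleGraph ι) : Prop :=
  ∀ X Y : Finset ι, #X = 3 → #Y = 3 → ¬∀ x ∈ X, ∀ y ∈ Y, H.Adj x y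

structure IsLastBlock (H : SimpleGraph ι) [DecidableEq ι] [DecidableRel H.Adj] (S B : Finset ι) :
    Prop where
  nonempty : B.Nonempty
  subset : B ⊆ S
  isPathOrLongCycle : H.IsPathOrLongCycle B
  card_filter_adj_sdiff_le : ∀ v ∈ B, #((S \ B).filter (H.Adj v)) ≤ 1

def HasDecomposition (H : SimpleGraph ι) (S : Finset ι) : Prop :=
  ∃ (t : ℕ) (B : Fin t → Finset ι), (∀ i, B i ⊆ S) ∧ (∀ v ∈ S, ∃! i, v ∈ B i) ∧
    (∀ i, H.IsPathOrLongCycle (B i)) ∧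
    ∀ i, ∀ v ∈ B i, {w | H.Adj v w ∧ ∃ j, j < i ∧ w ∈ B j}.ncard ≤ 1

variable [DecidableEq ι]

lemma nonempty_induce_image_iso {m : ℕ} (G : SimpleGraph (Fin m))
    (hinj : ∀ i < m, ∀ j < m, f i = f j → i = j)
    (hadj : ∀ i j : Fin m, H.Adj (f i) (f j) ↔ G.Adj i j) :
    Nonempty (H.induce ((range m).image f : Set ι) ≃g G) := by
  let e : G ↪g H :=
    ⟨⟨fun i => f i, fun i j h => Fin.ext (hinj i i.2 j j.2 h)⟩, hadj _ _⟩
  have hrange : ((range m).image f : Set ι) = Set.range e := by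
    ext x
    simp only [coe_image, coe_range, Set.mem_image, Set.mem_Iio, Set.mem_range]
    exact ⟨fun ⟨i, hi, hx⟩ => ⟨⟨i, hi⟩, hx⟩, fun ⟨i, hx⟩ => ⟨i, i.2, hx⟩⟩
  rw [hrange]
  exact ⟨e.isoInduceRange.symm⟩

lemma IsInducedPath.isPathOrLongCycle (hf : H.IsInducedPath S M f) :
    H.IsPathOrLongCycle ((range M).image f) :=
  Or.inl ⟨M, nonempty_induce_image_iso _ hf.injOn fun i j => by
    rw [hf.adj_iff i i.2 j j.2, pathGraph_adj]⟩

lemma IsInducedCycle.isPathOrLongCycle (hf : H.IsInducedCycle S M f) (hM : 6 ≤ M) :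
    H.IsPathOrLongCycle ((range M).image f) := by
  refine Or.inr ⟨M, hM, nonempty_induce_image_iso _ hf.injOn fun i j => ?_⟩
  rw [hf.adj_iff i i.2 j j.2, cycleGraph_adj', Fin.val_sub_eq_one_iff (by omega),
    Fin.val_sub_eq_one_iff (by omega)]
  omega

lemma IsInducedPath.eq_two_of_adj_one (c : H.Coloring (Fin 2)) (hK : H.K33Free)
    (hf : H.IsInducedPath S 3 f) (hmax : ∀ g, ¬H.IsInducedPath S 4 g) {p q r : ι} (hpS : p ∈ S) (hqS : q ∈ S) (hrS : r ∈ S)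
    (hpf : ∀ i < 3, f i ≠ p) (hqf : ∀ i < 3, f i ≠ q) (hpq : p ≠ q) (hp0 : H.Adj (f 0) p)
    (hq0 : H.Adj (f 0) q) (hp2 : H.Adj (f 2) p) (hq2 : H.Adj (f 2) q) (hr1 : H.Adj (f 1) r)
    (hr0 : r ≠ f 0) : r = f 2 := by
  by_contra hr2
  have h10 : H.Adj (f 1) (f 0) := (hf.adj_succ (i := 0) (by omega)).symm
  have h12 : H.Adj (f 1) (f 2) := hf.adj_succ (i := 1) (by omega)
  have hr : ∀ y ∈ S, H.Adj (f 0) y → y ≠ f 1 → H.Adj r y := fun y hy hy0 hy1 =>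
    adj_of_forall_not_isInducedPath_four c hmax (hf.mem 1 (by omega)) (hf.mem 0 (by omega)) hy
      hrS h10 hy0 hy1.symm hr1.symm hr0 (by rintro rfl; exact c.not_adj_of_adj_of_adj h10 hy0 hr1)
  have hrp := hr p hpS hp0 (hpf 1 (by omega)).symm
  have hrq := hr q hqS hq0 (hqf 1 (by omega)).symm
  have h02 : f 0 ≠ f 2 := fun h => by have := hf.injOn 0 (by omega) 2 (by omega) h; omega
  refine hK {f 0, f 2, r} {f 1, p, q} ?_ ?_ ?_
  · rw [card_insert_of_notMem (by simp [h02, Ne.symm hr0]), card_pair (Ne.symm hr2)]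
  · rw [card_insert_of_notMem (by simp [hpf 1 (by omega), hqf 1 (by omega)]), card_pair hpq]
  · simp only [mem_insert, mem_singleton]
    rintro x (rfl | rfl | rfl) y (rfl | rfl | rfl)
    exacts [h10.symm, hp0, hq0, h12.symm, hp2, hq2, hr1.symm, hrp, hrq]

variable [DecidableRel H.Adj]

lemma card_filter_adj_sdiff_add_card_le {B A : Finset ι} {v : ι} (hBS : B ⊆ S) (hAB : A ⊆ B)
    (hA : ∀ a ∈ A, H.Adj v a) :
    #((S \ B).filter (H.Adj v)) + #A ≤ #(S.filter (H.Adj v)) := by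
  have hdisj : Disjoint ((S \ B).filter (H.Adj v)) A :=
    disjoint_of_subset_right hAB (disjoint_sdiff_self_left.mono_left (filter_subset _ _))
  rw [← card_union_of_disjoint hdisj]
  refine card_le_card (union_subset (filter_subset_filter _ sdiff_subset) fun a ha => ?_)
  exact mem_filter.2 ⟨hBS (hAB ha), hA a ha⟩

lemma card_filter_adj_sdiff_le_one_of_adj [H.LocallyFinite] (hΔ : ∀ v, H.degree v ≤ 3)
    {B : Finset ι} {v a b : ι} (hBS : B ⊆ S) (ha : a ∈ B) (hb : b ∈ B) (hab : a ≠ b)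
    (hva : H.Adj v a) (hvb : H.Adj v b) : #((S \ B).filter (H.Adj v)) ≤ 1 := by
  have := card_filter_adj_sdiff_add_card_le (H := H) (v := v) (A := {a, b}) hBS
    (by simp [insert_subset_iff, ha, hb]) (by simp [hva, hvb])
  have := card_filter_adj_le hΔ S v
  rw [card_pair hab] at *
  omega

lemma card_filter_adj_sdiff_le_one_of_card_le_two {B : Finset ι} {v a : ι} (hBS : B ⊆ S)
    (ha : a ∈ B) (hva : H.Adj v a) (hv : #(S.filter (H.Adj v)) ≤ 2) :
    #((S \ B).filter (H.Adj v)) ≤ 1 := by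
  have := card_filter_adj_sdiff_add_card_le (H := H) (v := v) (A := {a}) hBS (by simpa using ha)
    (by simpa using hva)
  rw [card_singleton] at this
  omega

lemma IsInducedCycle.isLastBlock [H.LocallyFinite] (hΔ : ∀ v, H.degree v ≤ 3)
    (hf : H.IsInducedCycle S M f) (hM : 6 ≤ M) : H.IsLastBlock S ((range M).image f) := by
  have hsub : (range M).image f ⊆ S := by simpa [image_subset_iff] using hf.mem
  refine ⟨⟨f 0, mem_image_of_mem f (mem_range.2 (by omega))⟩, hsub, hf.isPathOrLongCycle hM, ?_⟩
  simp only [mem_image, mem_range, forall_exists_index, and_imp]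
  rintro _ i hi rfl
  obtain ⟨a, b, ha, hb, hab, hia, hib⟩ : ∃ a b, a < M ∧ b < M ∧ a ≠ b ∧
      (i + 1 = a ∨ a + 1 = i ∨ i = 0 ∧ a + 1 = M ∨ a = 0 ∧ i + 1 = M) ∧
      (i + 1 = b ∨ b + 1 = i ∨ i = 0 ∧ b + 1 = M ∨ b = 0 ∧ i + 1 = M) := by
    rcases Nat.eq_zero_or_pos i with rfl | hi0
    · exact ⟨1, M - 1, by omega⟩
    · by_cases hlast : i + 1 = M
      · exact ⟨i - 1, 0, by omega⟩
      · exact ⟨i + 1, i - 1, by omega⟩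
  exact card_filter_adj_sdiff_le_one_of_adj hΔ hsub (mem_image_of_mem f (mem_range.2 ha))
    (mem_image_of_mem f (mem_range.2 hb)) (fun h => hab (hf.injOn a ha b hb h))
    ((hf.adj_iff i hi a ha).2 hia) ((hf.adj_iff i hi b hb).2 hib)

namespace IsInducedPath

lemma isLastBlock [H.LocallyFinite] (hΔ : ∀ v, H.degree v ≤ 3) (hf : H.IsInducedPath S M f)
    (hM : 0 < M) (hmax : ∀ g, ¬H.IsInducedPath S (M + 1) g)
    (h0 : #(S.filter (H.Adj (f 0))) ≤ 2) (hlast : #(S.filter (H.Adj (f (M - 1)))) ≤ 2) : H.IsLastBlock S ((range M).image f) := by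
  have hB : ∀ i < M, f i ∈ (range M).image f := fun i hi => mem_image_of_mem f (mem_range.2 hi)
  have hsub : (range M).image f ⊆ S := by simpa [image_subset_iff] using hf.mem
  refine ⟨⟨f 0, hB 0 hM⟩, hsub, hf.isPathOrLongCycle, ?_⟩
  simp only [mem_image, mem_range, forall_exists_index, and_imp]
  rintro _ i hi rfl
  by_cases hM1 : M = 1
  · subst hM1
    obtain rfl : i = 0 := by omega
    suffices (S \ (range 1).image f).filter (H.Adj (f 0)) = ∅ by rw [this, card_empty]; omega
    refine filter_eq_empty_iff.2 fun y hy hadj => ?_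
    obtain ⟨j, hj, hjM, -⟩ := hf.exists_adj_of_maximal hmax (mem_sdiff.1 hy).1
      (fun j hj h => (mem_sdiff.1 hy).2 (h ▸ hB j hj)) hadj.symm
    omega
  by_cases hi0 : i = 0
  · subst hi0
    exact card_filter_adj_sdiff_le_one_of_card_le_two hsub (hB 1 (by omega))
      (hf.adj_succ (by omega)) h0
  by_cases hiM : i = M - 1
  · subst hiM
    refine card_filter_adj_sdiff_le_one_of_card_le_two hsub (hB (M - 2) (by omega)) ?_ hlast
    exact (hf.adj_iff _ (by omega) _ (by omega)).2 (by omega)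
  exact card_filter_adj_sdiff_le_one_of_adj hΔ hsub (hB (i - 1) (by omega)) (hB (i + 1) (by omega))
    (fun h => by have := hf.injOn _ (by omega) _ (by omega) h; omega)
    ((hf.adj_iff _ hi _ (by omega)).2 (by omega)) ((hf.adj_iff _ hi _ (by omega)).2 (by omega))

lemma exists_isLastBlock_or_adj_two [H.LocallyFinite] (hΔ : ∀ v, H.degree v ≤ 3)
    (c : H.Coloring (Fin 2)) (hf : H.IsInducedPath S M f)
    (hmax : ∀ g, ¬H.IsInducedPath S (M + 1) g) {y : ι} (hy : y ∈ S) (hy0 : H.Adj y (f 0))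
    (hy1 : y ≠ f 1) : (∃ B, H.IsLastBlock S B) ∨ 2 < M ∧ H.Adj y (f 2) := by
  have hyf := hf.ne_of_adj_zero hy0 hy1
  have hex := hf.exists_adj_of_maximal hmax hy hyf hy0
  obtain ⟨hk0, hkM, hyk⟩ := Nat.find_spec hex
  have hmin : ∀ i, 0 < i → i < Nat.find hex → ¬H.Adj y (f i) :=
    fun i hi hik h => Nat.find_min hex hik ⟨hi, by omega, h⟩
  have heven : Even (Nat.find hex) :=
    (hf.color_eq_iff_even c hkM).1 (c.eq_of_adj_of_adj hyk.symm hy0)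
  by_cases hk : Nat.find hex = 2
  · exact Or.inr ⟨hk ▸ hkM, hk ▸ hyk⟩
  · refine Or.inl ⟨_, (hf.isInducedCycle_of_chord hy hyf hy0 hyk hkM hmin).isLastBlock hΔ ?_⟩
    obtain ⟨k, hk'⟩ := heven
    omega

lemma le_three_of_adj_two [H.LocallyFinite] (hΔ : ∀ v, H.degree v ≤ 3)
    (hf : H.IsInducedPath S M f) {p q : ι} (hpS : p ∈ S) (hqS : q ∈ S) (hpf : ∀ i < M, f i ≠ p)
    (hqf : ∀ i < M, f i ≠ q) (hpq : p ≠ q) (hp : H.Adj (f 2) p) (hq : H.Adj (f 2) q) :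
    M ≤ 3 := by
  by_contra! hM
  have h13 : f 1 ≠ f 3 := fun h => by have := hf.injOn 1 (by omega) 3 (by omega) h; omega
  have hsub : ({f 1, f 3, p, q} : Finset ι) ⊆ S.filter (H.Adj (f 2)) := by
    simp only [insert_subset_iff, singleton_subset_iff, mem_filter]
    exact ⟨⟨hf.mem 1 (by omega), (hf.adj_succ (i := 1) (by omega)).symm⟩,
      ⟨hf.mem 3 hM, hf.adj_succ (i := 2) hM⟩, ⟨hpS, hp⟩, ⟨hqS, hq⟩⟩
  have hcard : #({f 1, f 3, p, q} : Finset ι) = 4 := by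
    rw [card_insert_of_notMem, card_insert_of_notMem, card_pair hpq] <;>
      simp [h13, hpf 1 (by omega), hpf 3 hM, hqf 1 (by omega), hqf 3 hM]
  have := card_le_card hsub
  have := card_filter_adj_le hΔ S (f 2)
  omega

lemma exists_isLastBlock_of_forall_adj_one [H.LocallyFinite] (hΔ : ∀ v, H.degree v ≤ 3)
    (c : H.Coloring (Fin 2)) (hf : H.IsInducedPath S 3 f) (hmax : ∀ g, ¬H.IsInducedPath S 4 g)
    {p : ι} (hpS : p ∈ S) (hpf : ∀ i < 3, f i ≠ p) (hp0 : H.Adj (f 0) p)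
    (h1 : ∀ r ∈ S, H.Adj (f 1) r → r ≠ f 0 → r = f 2) : ∃ B, H.IsLastBlock S B := by
  have h10 : H.Adj (f 1) (f 0) := (hf.adj_succ (i := 0) (by omega)).symm
  have hdeg : ∀ v, (∀ x ∈ S, H.Adj v x → x = f 0 ∨ x = f 2) → #(S.filter (H.Adj v)) ≤ 2 :=
    fun v hv => (card_le_card fun x hx => by
      simp only [mem_filter, mem_insert, mem_singleton] at hx ⊢
      exact hv x hx.1 hx.2).trans card_le_two
  have hdeg1 := hdeg (f 1) fun x hx h1x => or_iff_not_imp_left.2 (h1 x hx h1x)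
  have hdegp := hdeg p fun x hx hpx => by
    refine or_iff_not_imp_left.2 fun hx0 => h1 x hx ?_ hx0
    have hx1 : x ≠ f 1 := by rintro rfl; exact c.not_adj_of_adj_of_adj h10 hp0 hpx.symm
    exact (adj_of_forall_not_isInducedPath_four c hmax hpS (hf.mem 0 (by omega))
      (hf.mem 1 (by omega)) hx hp0.symm h10.symm (hpf 1 (by omega)).symm hpx.symm hx0 hx1).symm
  have hg := isInducedPath_three (hf.mem 1 (by omega)) (hf.mem 0 (by omega)) hpS h10 hp0
    (c.not_adj_of_adj_of_adj h10 hp0) (hpf 1 (by omega))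
  exact ⟨_, hg.isLastBlock hΔ (by omega) hmax (by simpa using hdeg1) (by simpa using hdegp)⟩

lemma exists_isLastBlock_of_three_le [H.LocallyFinite] (hΔ : ∀ v, H.degree v ≤ 3)
    (c : H.Coloring (Fin 2)) (hK : H.K33Free) (hf : H.IsInducedPath S M f)
    (hmax : ∀ g, ¬H.IsInducedPath S (M + 1) g) (h0 : 3 ≤ #(S.filter (H.Adj (f 0)))) :
    ∃ B, H.IsLastBlock S B := by
  obtain ⟨p, hp, q, hq, hpq⟩ := one_lt_card.1 (by
    have := pred_card_le_card_erase (s := S.filter (H.Adj (f 0))) (a := f 1)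
    omega : 1 < #((S.filter (H.Adj (f 0))).erase (f 1)))
  simp only [mem_erase, mem_filter] at hp hq
  obtain ⟨hp1, hpS, hp0⟩ := hp
  obtain ⟨hq1, hqS, hq0⟩ := hq
  rcases hf.exists_isLastBlock_or_adj_two hΔ c hmax hpS hp0.symm hp1 with hB | ⟨hM, hp2⟩
  · exact hB
  rcases hf.exists_isLastBlock_or_adj_two hΔ c hmax hqS hq0.symm hq1 with hB | ⟨-, hq2⟩
  · exact hB
  have hpf := hf.ne_of_adj_zero hp0.symm hp1
  have hqf := hf.ne_of_adj_zero hq0.symm hq1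
  obtain rfl : M = 3 :=
    le_antisymm (hf.le_three_of_adj_two hΔ hpS hqS hpf hqf hpq hp2.symm hq2.symm) hM
  exact hf.exists_isLastBlock_of_forall_adj_one hΔ c hmax hpS hpf hp0 fun r hrS hr1 hr0 =>
    hf.eq_two_of_adj_one c hK hmax hpS hqS hrS hpf hqf hpq hp0 hq0 hp2.symm hq2.symm hr1 hr0

end IsInducedPath

lemma exists_isLastBlock [H.LocallyFinite] (hΔ : ∀ v, H.degree v ≤ 3) (c : H.Coloring (Fin 2))
    (hK : H.K33Free) (hS : S.Nonempty) : ∃ B, H.IsLastBlock S B := by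
  obtain ⟨M, f, hM, hf, hmax⟩ := exists_longest_isInducedPath hS
  by_cases h0 : 3 ≤ #(S.filter (H.Adj (f 0)))
  · exact hf.exists_isLastBlock_of_three_le hΔ c hK hmax h0
  by_cases hlast : 3 ≤ #(S.filter (H.Adj (f (M - 1))))
  · exact hf.reverse.exists_isLastBlock_of_three_le hΔ c hK hmax (by simpa using hlast)
  exact ⟨_, hf.isLastBlock hΔ hM hmax (by omega) (by omega)⟩

lemma HasDecomposition.snoc {B : Finset ι} (hD : H.HasDecomposition (S \ B))
    (hB : H.IsLastBlock S B) : H.HasDecomposition S := by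
  obtain ⟨t, C, hsub, hpart, hshape, hback⟩ := hD
  refine ⟨t + 1, Fin.snoc C B, ?_, fun v hv => ?_, ?_, ?_⟩
  · refine Fin.lastCases ?_ fun i => ?_
    · simpa using hB.subset
    · simpa using (hsub i).trans sdiff_subset
  · by_cases hvB : v ∈ B
    · refine ⟨Fin.last t, by simpa, Fin.lastCases (fun _ => rfl) fun i hi => ?_⟩
      simp only [Fin.snoc_castSucc] at hi
      exact absurd (hsub i hi) (by simp [hvB])
    · obtain ⟨i, hi, huniq⟩ := hpart v (mem_sdiff.2 ⟨hv, hvB⟩)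
      refine ⟨i.castSucc, by simpa, Fin.lastCases (fun h => ?_) fun j hj => ?_⟩
      · simp only [Fin.snoc_last] at h
        exact absurd h hvB
      · simp only [Fin.snoc_castSucc] at hj
        rw [huniq j hj]
  · refine Fin.lastCases ?_ fun i => ?_
    · simpa using hB.isPathOrLongCycle
    · simpa using hshape i
  · refine Fin.lastCases (fun v hv => ?_) fun i v hv => ?_
    · simp only [Fin.snoc_last] at hv
      refine (Set.ncard_le_ncard (t := ((S \ B).filter (H.Adj v) : Set ι)) ?_
        (Set.toFinite _)).trans ?_
      · rintro w ⟨hvw, j, hj, hw⟩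
        obtain ⟨j, rfl⟩ := Fin.exists_castSucc_eq.2 hj.ne
        simp only [Fin.snoc_castSucc] at hw
        simpa [hvw] using hsub j hw
      · rw [Set.ncard_coe_finset]
        exact hB.card_filter_adj_sdiff_le v hv
    · simp only [Fin.snoc_castSucc] at hv
      convert hback i v hv using 5 with w
      simp [Fin.exists_fin_succ', lt_asymm (Fin.castSucc_lt_last i)]

theorem hasDecomposition [H.LocallyFinite] (hΔ : ∀ v, H.degree v ≤ 3) (c : H.Coloring (Fin 2))
    (hK : H.K33Free) (S : Finset ι) : H.HasDecomposition S := by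
  induction S using Finset.strongInduction with
  | H S ih =>
    rcases S.eq_empty_or_nonempty with rfl | hS
    · exact ⟨0, Fin.elim0, fun i => i.elim0, by simp, fun i => i.elim0, fun i => i.elim0⟩
    obtain ⟨B, hB⟩ := exists_isLastBlock hΔ c hK hS
    exact (ih _ (sdiff_ssubset hB.subset hB.nonempty)).snoc hB

lemma Connected.k33Free [Fintype ι] (hconn : H.Connected)
    (hΔ : ∀ v, H.degree v ≤ 3) (hcard : 7 ≤ Fintype.card ι) : H.K33Free := by
  intro X Y hX hY hXY
  have hnbr : ∀ {v : ι} {A : Finset ι}, #A = 3 → (∀ a ∈ A, H.Adj v a) → ∀ w, H.Adj v w → w ∈ A := by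
    intro v A hA hvA w hvw
    have hsub : A ⊆ H.neighborFinset v := fun a ha => (mem_neighborFinset _ _ _).2 (hvA a ha)
    rw [eq_of_subset_of_card_le hsub (by rw [card_neighborFinset_eq_degree, hA]; exact hΔ v)]
    exact (mem_neighborFinset _ _ _).2 hvw
  have hclosed : ∀ v ∈ X ∪ Y, ∀ w, H.Adj v w → w ∈ X ∪ Y := by
    intro v hv w hvw
    rcases mem_union.1 hv with hv | hv
    · exact mem_union_right _ (hnbr hY (hXY v hv) w hvw)
    · exact mem_union_left _ (hnbr hX (fun x hx => (hXY x hx v hv).symm) w hvw)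
  have hwalk : ∀ {u v} (p : H.Walk u v), u ∈ X ∪ Y → v ∈ X ∪ Y := by
    intro u v p
    induction p with
    | nil => exact id
    | cons h _ ih => exact fun hu => ih (hclosed _ hu _ h)
  obtain ⟨x, hx⟩ := card_pos.1 (by omega : 0 < #X)
  have := card_le_card fun v (_ : v ∈ univ) =>
    hwalk (hconn.preconnected x v).some (mem_union_left Y hx)
  have := card_union_le X Y
  rw [card_univ] at *
  omega

end SimpleGraph

/-- A connected bipartite graph of maximum degree at most three on at least
seven vertices admits a partition of its vertex set into blocks, each inducing a
path or a cycle of length at least six, such that every vertex of a block has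
at most one neighbour in earlier blocks. -/
theorem bipartite_cubic_decomposition {ι : Type*} [Fintype ι] (H : SimpleGraph ι)
    (hconn : H.Connected)
    (hdeg : ∀ v, (H.neighborSet v).ncard ≤ 3)
    (hbip : H.Colorable 2)
    (hcard : 7 ≤ Fintype.card ι) :
    ∃ (t : ℕ) (B : Fin t → Finset ι),
      (∀ v : ι, ∃! i : Fin t, v ∈ B i) ∧
      (∀ i : Fin t,
        (∃ m : ℕ, Nonempty (H.induce (B i : Set ι) ≃g SimpleGraph.pathGraph m)) ∨
        (∃ m : ℕ, 6 ≤ m ∧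
          Nonempty (H.induce (B i : Set ι) ≃g SimpleGraph.cycleGraph m))) ∧
      (∀ i : Fin t, ∀ v ∈ B i,
        Set.ncard {w : ι | H.Adj v w ∧ ∃ j : Fin t, j < i ∧ w ∈ B j} ≤ 1) := by
  classical
  have hΔ : ∀ v, H.degree v ≤ 3 := fun v => by
    rw [← SimpleGraph.card_neighborSet_eq_degree, ← Set.toFinset_card,
      ← Set.ncard_eq_toFinset_card']
    exact hdeg v
  obtain ⟨c⟩ := hbip
  obtain ⟨t, B, -, hpart, hshape, hback⟩ := H.hasDecomposition hΔ c (hconn.k33Free hΔ hcard) univ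
  exact ⟨t, B, fun v => hpart v (mem_univ v), hshape, hback⟩
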